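/- Let a > 1/2 and μ ≥ 0, and set d = 1/2 − a + √(μ/2 + (a − 1/2)²), ν = d + a + 1/2, and α = (1 + 2a + 2ν)/4. For all t > 0, x > 0, and λ ≥ 0, with p(t,x,y) = (y/t) (y/x)^{a−1/2} exp( −(x²+y²)/(2t) ) I_{ν−1}(xy/t), one has ∫_0^∞ e^{−λ y²} p(t,x,y) dy = e^{−x²/(2t)} (x²/(2t))^{(2ν−2a−1)/4} · Γ(α) ₁F₁(α, ν, x²/(2t + 4t²λ)) / ( Γ(ν) (1 + 2tλ)^α ). -/

import Mathlib

open Real MeasureTheory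

/-- The modified Bessel function of the first kind,
`I_ν(z) = ∑_{k=0}^∞ (z/2)^{2k+ν} / (k! Γ(k+ν+1))`. -/
noncomputable def besselI (ν z : ℝ) : ℝ :=
  ∑' k : ℕ, (z / 2) ^ (2 * (k : ℝ) + ν) / ((Nat.factorial k : ℝ) * Real.Gamma ((k : ℝ) + ν + 1))

/-- Kummer's confluent hypergeometric function
`₁F₁(a,b,z) = ∑_{k=0}^∞ ((a)_k/(b)_k) zᵏ/k!`. -/
noncomputable def hyp1F1 (a b z : ℝ) : ℝ :=
  ∑' k : ℕ, ((∏ i ∈ Finset.range k, (a + (i : ℝ))) / (∏ i ∈ Finset.range k, (b + (i : ℝ))))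
      * z ^ k / (Nat.factorial k : ℝ)

/-!
Expanding `I_{ν-1}(by)` in its power series, each term of `y ^ s e^{-c y²} I_{ν-1}(b y)` is a
Gaussian moment `∫₀^∞ y^q e^{-c y²} dy = Γ((q+1)/2) / (2 c^{(q+1)/2})`. Writing the resulting
ratio `Γ(k + α) / Γ(k + ν)` as `Γ(α) (α)_k / (Γ(ν) (ν)_k)` turns the series of integrals into
the Kummer series `₁F₁(α, ν, b²/(4c))` with `α = (s + ν)/2` (Weber's integral); the terms are
nonnegative and their integrals summable, so integral and sum commute. The theorem is the case
`s = a + 1/2`, `b = x/t`, `c = λ + 1/(2t)`.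
-/

open Set

noncomputable def hyp1F1Term (a b z : ℝ) (k : ℕ) : ℝ :=
  (∏ i ∈ Finset.range k, (a + (i : ℝ))) / (∏ i ∈ Finset.range k, (b + (i : ℝ))) * z ^ k
    / (k.factorial : ℝ)

lemma hyp1F1_eq_tsum (a b z : ℝ) : hyp1F1 a b z = ∑' k, hyp1F1Term a b z k := rfl

noncomputable def besselICoeff (ν b : ℝ) (k : ℕ) : ℝ :=
  (b / 2) ^ (2 * (k : ℝ) + ν - 1) / ((k.factorial : ℝ) * Gamma (k + ν))

lemma Real.Gamma_natCast_add_eq_mul_prod {z : ℝ} (hz : 0 < z) (k : ℕ) :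
    Gamma (k + z) = Gamma z * ∏ i ∈ Finset.range k, (z + i) := by
  induction k with
  | zero => simp
  | succ n ih =>
    rw [Finset.prod_range_succ, Nat.cast_succ, add_right_comm, Gamma_add_one (by positivity), ih]
    ring

lemma prod_add_div_prod_add_le_pow {α ν : ℝ} (hα : 0 ≤ α) (hν : 0 < ν) (k : ℕ) :
    (∏ i ∈ Finset.range k, (α + i)) / ∏ i ∈ Finset.range k, (ν + i) ≤ max 1 (α / ν) ^ k := by
  calc (∏ i ∈ Finset.range k, (α + i)) / ∏ i ∈ Finset.range k, (ν + i)
      = ∏ i ∈ Finset.range k, (α + i) / (ν + i) := (Finset.prod_div_distrib ..).symm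
    _ ≤ ∏ _i ∈ Finset.range k, max 1 (α / ν) :=
      Finset.prod_le_prod (fun i _ => by positivity) fun i _ => ?_
    _ = max 1 (α / ν) ^ k := by rw [Finset.prod_const, Finset.card_range]
  have hi : (0 : ℝ) ≤ i := i.cast_nonneg
  rw [div_le_iff₀ (by positivity)]
  rcases le_total α ν with h | h
  · nlinarith [le_max_left 1 (α / ν)]
  · have h1 : 1 ≤ α / ν := (one_le_div hν).2 h
    nlinarith [le_max_right 1 (α / ν), div_mul_cancel₀ α hν.ne']

lemma summable_hyp1F1Term {α ν z : ℝ} (hα : 0 ≤ α) (hν : 0 < ν) (hz : 0 ≤ z) :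
    Summable (hyp1F1Term α ν z) := by
  refine (Real.summable_pow_div_factorial (max 1 (α / ν) * z)).of_nonneg_of_le
    (fun k => by unfold hyp1F1Term; positivity) fun k => ?_
  rw [hyp1F1Term, mul_pow]
  gcongr
  exact prod_add_div_prod_add_le_pow hα hν k

lemma besselI_sub_one_mul_eq_tsum {ν b y : ℝ} (hb : 0 ≤ b) (hy : 0 ≤ y) :
    besselI (ν - 1) (b * y)
      = ∑' k : ℕ, besselICoeff ν b k * y ^ (2 * (k : ℝ) + ν - 1) := by
  refine tsum_congr fun k => ?_
  rw [besselICoeff, show b * y / 2 = b / 2 * y by ring, mul_rpow (by positivity) hy,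
    show (k : ℝ) + (ν - 1) + 1 = k + ν by ring,
    show 2 * (k : ℝ) + (ν - 1) = 2 * k + ν - 1 by ring]
  ring

lemma integral_rpow_mul_exp_neg_mul_sq {q c : ℝ} (hq : -1 < q) (hc : 0 < c) :
    ∫ y in Ioi 0, y ^ q * exp (-c * y ^ 2)
      = Gamma ((q + 1) / 2) / (2 * c ^ ((q + 1) / 2)) := by
  have h := integral_rpow_mul_exp_neg_mul_rpow two_pos hq hc
  simp only [rpow_two] at h
  rw [h, neg_div, rpow_neg hc.le]
  field_simp

lemma integral_besselICoeff_mul_rpow_mul_exp_neg_mul_sq {s ν b c : ℝ} (hν : 0 < ν)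
    (hsν : 0 < s + ν) (hb : 0 < b) (hc : 0 < c) (k : ℕ) :
    ∫ y in Ioi 0, besselICoeff ν b k * (y ^ (2 * (k : ℝ) + ν - 1 + s) * exp (-c * y ^ 2))
      = (b / 2) ^ (ν - 1) * Gamma ((s + ν) / 2) / (2 * Gamma ν * c ^ ((s + ν) / 2))
        * hyp1F1Term ((s + ν) / 2) ν (b ^ 2 / (4 * c)) k := by
  set α := (s + ν) / 2
  have hα : 0 < α := by positivity
  have hexp : -1 < 2 * (k : ℝ) + ν - 1 + s := by linarith [k.cast_nonneg (α := ℝ)]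
  have hkα : (2 * (k : ℝ) + ν - 1 + s + 1) / 2 = k + α := by ring
  have hb2 : (b / 2) ^ (2 * (k : ℝ) + ν - 1) = (b / 2) ^ (ν - 1) * (b ^ 2 / 4) ^ k := by
    rw [show 2 * (k : ℝ) + ν - 1 = ν - 1 + (2 * k : ℕ) by push_cast; ring,
      rpow_add_natCast (by positivity), pow_mul]
    ring
  have hz : (b ^ 2 / (4 * c)) ^ k = (b ^ 2 / 4) ^ k / c ^ k := by
    rw [div_mul_eq_div_div, div_pow]
  have hck : c ^ ((k : ℝ) + α) = c ^ k * c ^ α := by rw [rpow_add hc, rpow_natCast]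
  have hΓν := Gamma_pos_of_pos hν
  have hΓα := Gamma_pos_of_pos hα
  have hprod : 0 < ∏ i ∈ Finset.range k, (ν + i) := Finset.prod_pos fun i _ => by positivity
  rw [integral_const_mul, integral_rpow_mul_exp_neg_mul_sq hexp hc, hkα, besselICoeff, hb2,
    hck, Gamma_natCast_add_eq_mul_prod hν, Gamma_natCast_add_eq_mul_prod hα, hyp1F1Term, hz]
  field_simp

theorem integral_rpow_mul_exp_neg_mul_sq_mul_besselI {s ν b c : ℝ} (hν : 0 < ν)
    (hsν : 0 < s + ν) (hb : 0 < b) (hc : 0 < c) :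
    ∫ y in Ioi 0, y ^ s * exp (-c * y ^ 2) * besselI (ν - 1) (b * y)
      = (b / 2) ^ (ν - 1) * Gamma ((s + ν) / 2) / (2 * Gamma ν * c ^ ((s + ν) / 2))
        * hyp1F1 ((s + ν) / 2) ν (b ^ 2 / (4 * c)) := by
  set F : ℕ → ℝ → ℝ := fun k y =>
    besselICoeff ν b k * (y ^ (2 * (k : ℝ) + ν - 1 + s) * exp (-c * y ^ 2))
  have hF_int (k : ℕ) : IntegrableOn (F k) (Ioi 0) :=
    (integrableOn_rpow_mul_exp_neg_mul_sq hc
      (by linarith [k.cast_nonneg (α := ℝ)])).const_mul _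
  have hF_nonneg (k : ℕ) (y : ℝ) (hy : 0 < y) : 0 ≤ F k y := by
    have := Gamma_pos_of_pos (show 0 < k + ν by positivity)
    simp only [F, besselICoeff]
    positivity
  have hseries (y : ℝ) (hy : 0 < y) :
      y ^ s * exp (-c * y ^ 2) * besselI (ν - 1) (b * y) = ∑' k, F k y := by
    rw [besselI_sub_one_mul_eq_tsum hb.le hy.le, ← tsum_mul_left]
    refine tsum_congr fun k => ?_
    simp only [F]
    rw [rpow_add hy]
    ring
  have hF_integral (k : ℕ) : ∫ y in Ioi 0, F k y
      = (b / 2) ^ (ν - 1) * Gamma ((s + ν) / 2) / (2 * Gamma ν * c ^ ((s + ν) / 2))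
        * hyp1F1Term ((s + ν) / 2) ν (b ^ 2 / (4 * c)) k :=
    integral_besselICoeff_mul_rpow_mul_exp_neg_mul_sq hν hsν hb hc k
  have hF_norm (k : ℕ) : ∫ y in Ioi 0, ‖F k y‖ = ∫ y in Ioi 0, F k y :=
    setIntegral_congr_fun measurableSet_Ioi fun y hy => norm_of_nonneg (hF_nonneg k y hy)
  have hF_norm_summable : Summable fun k => ∫ y in Ioi 0, ‖F k y‖ := by
    simp_rw [hF_norm, hF_integral]
    exact (summable_hyp1F1Term (by positivity) hν (by positivity)).mul_left _
  calc ∫ y in Ioi 0, y ^ s * exp (-c * y ^ 2) * besselI (ν - 1) (b * y)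
      = ∫ y in Ioi 0, ∑' k, F k y := setIntegral_congr_fun measurableSet_Ioi hseries
    _ = ∑' k, ∫ y in Ioi 0, F k y :=
      (integral_tsum_of_summable_integral_norm hF_int hF_norm_summable).symm
    _ = _ := by rw [hyp1F1_eq_tsum, ← tsum_mul_left]; exact tsum_congr hF_integral

lemma rpow_prefactor_eq {a ν x u q : ℝ} (hx : 0 < x) (hu : 0 < u) (hq : 0 < q) :
    x ^ (1 / 2 - a) * (x / u) ^ (ν - 1) / (u * (q / u) ^ ((a + 1 / 2 + ν) / 2))
      = (x ^ 2 / u) ^ ((2 * ν - 2 * a - 1) / 4) / q ^ ((a + 1 / 2 + ν) / 2) := by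
  refine log_injOn_pos (mem_Ioi.2 (by positivity)) (mem_Ioi.2 (by positivity)) ?_
  simp (disch := positivity) only [log_div, log_mul, log_rpow, log_pow]
  push_cast
  ring

lemma exp_neg_mul_sq_mul_fundamentalSolution_eq {a ν t x lam y : ℝ} (ht : 0 < t) (hx : 0 < x)
    (hy : 0 < y) :
    exp (-lam * y ^ 2) * ((y / t) * (y / x) ^ (a - 1 / 2)
        * exp (-(x ^ 2 + y ^ 2) / (2 * t)) * besselI (ν - 1) (x * y / t))
      = exp (-x ^ 2 / (2 * t)) * x ^ (1 / 2 - a) / t * (y ^ (a + 1 / 2)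
        * exp (-(lam + 1 / (2 * t)) * y ^ 2) * besselI (ν - 1) (x / t * y)) := by
  have hpow : y * (y / x) ^ (a - 1 / 2) = y ^ (a + 1 / 2) * x ^ (1 / 2 - a) := by
    rw [div_rpow hy.le hx.le, show 1 / 2 - a = -(a - 1 / 2) by ring, rpow_neg hx.le,
      show a + 1 / 2 = (a - 1 / 2) + 1 by ring, rpow_add_one hy.ne']
    ring
  have hexp : exp (-lam * y ^ 2) * exp (-(x ^ 2 + y ^ 2) / (2 * t))
      = exp (-x ^ 2 / (2 * t)) * exp (-(lam + 1 / (2 * t)) * y ^ 2) := by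
    rw [← exp_add, ← exp_add]
    congr 1
    field_simp
    ring
  rw [mul_div_right_comm x y t]
  linear_combination (besselI (ν - 1) (x / t * y) / t) * (exp (-lam * y ^ 2)
    * exp (-(x ^ 2 + y ^ 2) / (2 * t)) * hpow + y ^ (a + 1 / 2) * x ^ (1 / 2 - a) * hexp)

theorem stmt_8_general (a μ d ν α t x lam : ℝ) (ha : 1 / 2 < a)
    (hd : d = 1 / 2 - a + Real.sqrt (μ / 2 + (a - 1 / 2) ^ 2))
    (hν : ν = d + a + 1 / 2)
    (hα : α = (1 + 2 * a + 2 * ν) / 4)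
    (ht : 0 < t) (hx : 0 < x) (hlam : 0 ≤ lam)
    (p : ℝ → ℝ)
    (hp : ∀ y, p y = (y / t) * (y / x) ^ (a - 1 / 2)
        * Real.exp (-(x ^ 2 + y ^ 2) / (2 * t)) * besselI (ν - 1) (x * y / t)) :
    (∫ y in Set.Ioi (0 : ℝ), Real.exp (-lam * y ^ 2) * p y)
      = Real.exp (-x ^ 2 / (2 * t)) * (x ^ 2 / (2 * t)) ^ ((2 * ν - 2 * a - 1) / 4)
        * (Real.Gamma α * hyp1F1 α ν (x ^ 2 / (2 * t + 4 * t ^ 2 * lam)))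
          / (Real.Gamma ν * (1 + 2 * t * lam) ^ α) := by
  have hν_pos : 0 < ν := by
    rw [hν, hd]; linarith [sqrt_nonneg (μ / 2 + (a - 1 / 2) ^ 2)]
  have hα_eq : α = (a + 1 / 2 + ν) / 2 := by rw [hα]; ring
  have hc_eq : lam + 1 / (2 * t) = (1 + 2 * t * lam) / (2 * t) := by field_simp; ring
  have hz : (x / t) ^ 2 / (4 * (lam + 1 / (2 * t))) = x ^ 2 / (2 * t + 4 * t ^ 2 * lam) := by
    field_simp; ring
  have hprefactor := rpow_prefactor_eq (a := a) (ν := ν) hx (by positivity : 0 < 2 * t)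
    (by positivity : 0 < 1 + 2 * t * lam)
  rw [setIntegral_congr_fun measurableSet_Ioi fun y (hy : 0 < y) => by
      rw [hp, exp_neg_mul_sq_mul_fundamentalSolution_eq ht hx hy],
    integral_const_mul, integral_rpow_mul_exp_neg_mul_sq_mul_besselI hν_pos (by linarith)
      (by positivity) (by positivity), ← hα_eq, hz, hc_eq, div_div x t 2, mul_comm t 2]
  rw [← hα_eq] at hprefactor
  linear_combination (exp (-x ^ 2 / (2 * t)) * Gamma α
    * hyp1F1 α ν (x ^ 2 / (2 * t + 4 * t ^ 2 * lam)) / Gamma ν) * hprefactor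

/-- The expectation
`E_x(exp(-λX_t² - (μ/4)∫_0^t X_s^{-2} ds))` for the Bessel process, computed by
integrating `e^{-λy²}` against the fundamental solution (3.22). -/
theorem stmt_8 (a μ d ν α t x lam : ℝ) (ha : 1 / 2 < a) (hμ : 0 ≤ μ)
    (hd : d = 1 / 2 - a + Real.sqrt (μ / 2 + (a - 1 / 2) ^ 2))
    (hν : ν = d + a + 1 / 2)
    (hα : α = (1 + 2 * a + 2 * ν) / 4)
    (ht : 0 < t) (hx : 0 < x) (hlam : 0 ≤ lam)
    (p : ℝ → ℝ)
    (hp : ∀ y, p y = (y / t) * (y / x) ^ (a - 1 / 2)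
        * Real.exp (-(x ^ 2 + y ^ 2) / (2 * t)) * besselI (ν - 1) (x * y / t)) :
    (∫ y in Set.Ioi (0 : ℝ), Real.exp (-lam * y ^ 2) * p y)
      = Real.exp (-x ^ 2 / (2 * t)) * (x ^ 2 / (2 * t)) ^ ((2 * ν - 2 * a - 1) / 4)
        * (Real.Gamma α * hyp1F1 α ν (x ^ 2 / (2 * t + 4 * t ^ 2 * lam)))
          / (Real.Gamma ν * (1 + 2 * t * lam) ^ α) :=
  stmt_8_general a μ d ν α t x lam ha hd hν hα ht hx hlam p hp
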